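/- arXiv:0812.1829 — 2 statements merged into one kernel-verified Lean document; each statement's English description precedes it below -/
import Mathlib

section
/- In a differential graded Lie algebra (L, d), the pairing {x, y} := (-1)^{|x|+1}[x, d(y)] satisfies the graded Jacobi-type identity up to boundaries: {x, {y, z}} - (-1)^{|x|+1}{{x, y}, z} - (-1)^{(|x|+1)(|y|+1)}{y, {x, z}} is a boundary in (L, d). -/
/-!
Leibniz together with `d² = 0` gives `d[a, db] = [da, db]`, so each of the three terms is, up to
sign, a bracket `[a, [db, dc]]`. Jacobi splits `[x, [dy, dz]]` into `[[x, dy], dz]`, which is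
`±{{x, y}, z}`, and `±[dy, [x, dz]]`; Leibniz turns the latter into `±d[y, [x, dz]] ± [y, [dx, dz]]`,
and `[y, [dx, dz]]` is `±{y, {x, z}}`. The combination is therefore `±d[y, [x, dz]]`.
-/

theorem neg_one_zpow_eq_of_even_sub {K : Type*} [DivisionRing K] {a b : ℤ} (h : Even (a - b)) :
    (-1 : K) ^ a = (-1) ^ b := by
  rw [← Int.cast_negOnePow, ← Int.cast_negOnePow, (Int.negOnePow_eq_iff a b).2 h]

theorem neg_neg_one_zpow {K : Type*} [DivisionRing K] (n : ℤ) :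
    -(-1 : K) ^ n = (-1) ^ (n + 1) := by
  rw [zpow_add_one₀ (by norm_num), mul_neg_one]

section DGLie

variable {L : Type*} [AddCommGroup L] [Module ℚ L] {deg : ℤ → Submodule ℚ L}
  {br : L →ₗ[ℚ] L →ₗ[ℚ] L} {d : L →ₗ[ℚ] L}

theorem d_br_d_eq_br_d_d (hdd : ∀ x : L, d (d x) = 0)
    (hleib : ∀ i : ℤ, ∀ x y : L, x ∈ deg i →
      d (br x y) = br (d x) y + ((-1 : ℚ) ^ i) • br x (d y))
    {p : ℤ} {x : L} (hx : x ∈ deg p) (y : L) :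
    d (br x (d y)) = br (d x) (d y) := by
  rw [hleib p x (d y) hx, hdd, map_zero, smul_zero, add_zero]

theorem br_br_d_d_eq (hdd : ∀ x : L, d (d x) = 0)
    (hddeg : ∀ i : ℤ, ∀ x : L, x ∈ deg i → d x ∈ deg (i - 1))
    (hjacobi : ∀ i j : ℤ, ∀ x y z : L, x ∈ deg i → y ∈ deg j →
      br x (br y z) = br (br x y) z + ((-1 : ℚ) ^ (i * j)) • br y (br x z))
    (hleib : ∀ i : ℤ, ∀ x y : L, x ∈ deg i →
      d (br x y) = br (d x) y + ((-1 : ℚ) ^ i) • br x (d y))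
    {p q : ℤ} {x y : L} (hx : x ∈ deg p) (hy : y ∈ deg q) (z : L) :
    br x (br (d y) (d z)) = br (br x (d y)) (d z) + ((-1 : ℚ) ^ (p * (q - 1))) •
      (d (br y (br x (d z))) - ((-1 : ℚ) ^ q) • br y (br (d x) (d z))) := by
  rw [hjacobi p (q - 1) x (d y) (d z) hx (hddeg q y hy), hleib q y _ hy,
    d_br_d_eq_br_d_d hdd hleib hx, add_sub_cancel_right]

end DGLie

theorem whitehead_pairing_jacobi_up_to_boundary_general
    {L : Type} [AddCommGroup L] [Module ℚ L]
    (deg : ℤ → Submodule ℚ L)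
    (br : L →ₗ[ℚ] L →ₗ[ℚ] L)
    (d : L →ₗ[ℚ] L)
    (hddeg : ∀ i : ℤ, ∀ x : L, x ∈ deg i → d x ∈ deg (i - 1))
    (hdd : ∀ x : L, d (d x) = 0)
    (hjacobi : ∀ i j : ℤ, ∀ x y z : L, x ∈ deg i → y ∈ deg j →
      br x (br y z) = br (br x y) z + ((-1 : ℚ) ^ (i * j)) • br y (br x z))
    (hleib : ∀ i : ℤ, ∀ x y : L, x ∈ deg i →
      d (br x y) = br (d x) y + ((-1 : ℚ) ^ i) • br x (d y))
    (p q : ℤ) (x y z : L) (hx : x ∈ deg p) (hy : y ∈ deg q) :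
    ∃ w : L, d w =
      -- {x, {y, z}}
      ((-1 : ℚ) ^ (p + 1)) • br x (d (((-1 : ℚ) ^ (q + 1)) • br y (d z)))
      -- - (-1)^(|x|+1) {{x, y}, z}
      - ((-1 : ℚ) ^ (p + 1)) •
          (((-1 : ℚ) ^ (p + q)) • br (((-1 : ℚ) ^ (p + 1)) • br x (d y)) (d z))
      -- - (-1)^((|x|+1)(|y|+1)) {y, {x, z}}
      - ((-1 : ℚ) ^ ((p + 1) * (q + 1))) •
          (((-1 : ℚ) ^ (q + 1)) • br y (d (((-1 : ℚ) ^ (p + 1)) • br x (d z)))) := by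
  refine ⟨((-1 : ℚ) ^ (p * q + q)) • br y (br x (d z)), ?_⟩
  simp only [map_smul, LinearMap.smul_apply, d_br_d_eq_br_d_d hdd hleib hx,
    d_br_d_eq_br_d_d hdd hleib hy, br_br_d_d_eq hdd hddeg hjacobi hleib hx hy]
  -- one sign identity for each of `d[y, [x, dz]]`, `[[x, dy], dz]` and `[y, [dx, dz]]`
  match_scalars
  all_goals simp only [mul_one, neg_neg_one_zpow,
    ← zpow_add₀ (neg_ne_zero.2 one_ne_zero : (-1 : ℚ) ≠ 0)]
  · exact neg_one_zpow_eq_of_even_sub ⟨-1, by ring⟩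
  all_goals rw [eq_comm, sub_eq_zero]; exact neg_one_zpow_eq_of_even_sub ⟨-p, by ring⟩

/-- In a DG Lie algebra `(L, d)`, the pairing `{x, y} := (-1)^(|x|+1) [x, d y]`
satisfies the graded Jacobi-type identity up to boundaries. -/
theorem whitehead_pairing_jacobi_up_to_boundary
    {L : Type} [AddCommGroup L] [Module ℚ L]
    (deg : ℤ → Submodule ℚ L)
    (br : L →ₗ[ℚ] L →ₗ[ℚ] L)
    (d : L →ₗ[ℚ] L)
    (hbrdeg : ∀ i j : ℤ, ∀ x y : L, x ∈ deg i → y ∈ deg j → br x y ∈ deg (i + j))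
    (hddeg : ∀ i : ℤ, ∀ x : L, x ∈ deg i → d x ∈ deg (i - 1))
    (hdd : ∀ x : L, d (d x) = 0)
    (hanti : ∀ i j : ℤ, ∀ x y : L, x ∈ deg i → y ∈ deg j →
      br x y = ((-1 : ℚ) ^ (i * j + 1)) • br y x)
    (hjacobi : ∀ i j : ℤ, ∀ x y z : L, x ∈ deg i → y ∈ deg j →
      br x (br y z) = br (br x y) z + ((-1 : ℚ) ^ (i * j)) • br y (br x z))
    (hleib : ∀ i : ℤ, ∀ x y : L, x ∈ deg i →
      d (br x y) = br (d x) y + ((-1 : ℚ) ^ i) • br x (d y))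
    (p q r : ℤ) (x y z : L) (hx : x ∈ deg p) (hy : y ∈ deg q) (hz : z ∈ deg r) :
    ∃ w : L, d w =
      -- {x, {y, z}}
      ((-1 : ℚ) ^ (p + 1)) • br x (d (((-1 : ℚ) ^ (q + 1)) • br y (d z)))
      -- - (-1)^(|x|+1) {{x, y}, z}
      - ((-1 : ℚ) ^ (p + 1)) •
          (((-1 : ℚ) ^ (p + q)) • br (((-1 : ℚ) ^ (p + 1)) • br x (d y)) (d z))
      -- - (-1)^((|x|+1)(|y|+1)) {y, {x, z}}
      - ((-1 : ℚ) ^ ((p + 1) * (q + 1))) •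
          (((-1 : ℚ) ^ (q + 1)) • br y (d (((-1 : ℚ) ^ (p + 1)) • br x (d z)))) :=
  whitehead_pairing_jacobi_up_to_boundary_general deg br d hddeg hdd hjacobi hleib p q x y z hx hy
end

section
/- Let ψ : (L, d_L) → (K, d_K) be a DG Lie algebra map. The bilinear pairing on cycles of the mapping cone defined by ⟦(a, α), (b, β)⟧ = ((-1)^p[a, b], (-1)^{p+1}[α, d_K(β)]) for cycles of degrees p and q induces a well-defined bilinear pairing [·,·]_w on homology H_*(Rel(ψ)) lowering total degree by 1, which is graded commutative in the Whitehead sense: [x, y]_w = (-1)^{|x||y|}[y, x]_w for homology classes x, y. -/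
/-!
Every claim is a Leibniz-rule computation. For cycles,
`d_K [α, d_K β] = [d_K α, d_K β] = [ψ a, ψ b] = ψ [a, b]` cancels the `L`-part of `δ_ψ`.
The pairing of a boundary `δ_ψ (c, γ)` with a cycle, in either slot, is the boundary of the
corresponding bracket with `(c, γ)`. Under the swap, graded antisymmetry makes the `L`-parts
agree exactly, and the Leibniz rule for `[α, β]` shows that the `K`-parts differ by the
boundary `δ_ψ (0, -[α, β])`.
-/

lemma neg_one_zpow_add_one {α : Type*} [DivisionRing α] (m : ℤ) :
    (-1 : α) ^ (m + 1) = -(-1) ^ m := by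
  rw [zpow_add_one₀ (neg_ne_zero.mpr one_ne_zero), mul_neg_one]

lemma neg_one_zpow_eq_of_even_sub_s6 {α : Type*} [DivisionMonoid α] [HasDistribNeg α] {m n : ℤ}
    (h : Even (m - n)) : (-1 : α) ^ m = (-1) ^ n := by
  simp only [neg_one_zpow_eq_ite, Int.even_sub.mp h]

namespace MappingCone

variable {L K : Type*} [AddCommGroup L] [Module ℚ L] [AddCommGroup K] [Module ℚ K]

def LeibnizRule (deg : ℤ → Submodule ℚ L) (br : L →ₗ[ℚ] L →ₗ[ℚ] L) (d : L →ₗ[ℚ] L) : Prop :=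
  ∀ i : ℤ, ∀ x y : L, x ∈ deg i → d (br x y) = br (d x) y + ((-1 : ℚ) ^ i) • br x (d y)

def GradedAntisymm (deg : ℤ → Submodule ℚ L) (br : L →ₗ[ℚ] L →ₗ[ℚ] L) : Prop :=
  ∀ i j : ℤ, ∀ x y : L, x ∈ deg i → y ∈ deg j → br x y = ((-1 : ℚ) ^ (i * j + 1)) • br y x

/-- The differential `δ_ψ` of `Rel(ψ)`, with `Rel_n(ψ) = L_{n-1} ⊕ K_n` encoded as `L × K`. -/
def diff (dL : L →ₗ[ℚ] L) (dK : K →ₗ[ℚ] K) (ψ : L →ₗ[ℚ] K) (z : L × K) : L × K :=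
  (-dL z.1, ψ z.1 + dK z.2)

/-- `p` is the degree of the first argument. -/
def pairing (brL : L →ₗ[ℚ] L →ₗ[ℚ] L) (brK : K →ₗ[ℚ] K →ₗ[ℚ] K) (dK : K →ₗ[ℚ] K) (p : ℤ)
    (z w : L × K) : L × K :=
  (((-1 : ℚ) ^ p) • brL z.1 w.1, ((-1 : ℚ) ^ (p + 1)) • brK z.2 (dK w.2))

variable {degL : ℤ → Submodule ℚ L} {degK : ℤ → Submodule ℚ K}
  {brL : L →ₗ[ℚ] L →ₗ[ℚ] L} {brK : K →ₗ[ℚ] K →ₗ[ℚ] K}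
  {dL : L →ₗ[ℚ] L} {dK : K →ₗ[ℚ] K} {ψ : L →ₗ[ℚ] K}
  {p q : ℤ} {a b c : L} {α β γ : K}

theorem diff_pairing_eq_zero (hleibL : LeibnizRule degL brL dL)
    (hleibK : LeibnizRule degK brK dK) (hdK : ∀ x : K, dK (dK x) = 0)
    (hψlie : ∀ x y : L, ψ (brL x y) = brK (ψ x) (ψ y))
    (ha : a ∈ degL (p - 1)) (hα : α ∈ degK p) (hacyc : dL a = 0) (hbcyc : dL b = 0)
    (hαcyc : dK α = -ψ a) (hβcyc : dK β = -ψ b) :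
    diff dL dK ψ (pairing brL brK dK p (a, α) (b, β)) = 0 := by
  have hL : dL (brL a b) = 0 := by
    rw [hleibL (p - 1) a b ha, hacyc, hbcyc]; simp
  have hK : dK (brK α (dK β)) = ψ (brL a b) := by
    rw [hleibK p α (dK β) hα, hdK, hαcyc, hβcyc, hψlie]; simp
  simp only [diff, pairing, map_smul, hL, hK, neg_one_zpow_add_one]
  simp

theorem pairing_diff_left (hleibL : LeibnizRule degL brL dL)
    (hleibK : LeibnizRule degK brK dK)
    (hψlie : ∀ x y : L, ψ (brL x y) = brK (ψ x) (ψ y)) (hψchain : ∀ x : L, ψ (dL x) = dK (ψ x))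
    (hc : c ∈ degL p) (hγ : γ ∈ degK (p + 1)) (hbcyc : dL b = 0) (hβcyc : dK β = -ψ b) :
    pairing brL brK dK p (diff dL dK ψ (c, γ)) (b, β) =
      diff dL dK ψ (((-1 : ℚ) ^ p) • brL c b, ((-1 : ℚ) ^ p) • brK γ (ψ b)) := by
  have hψb : dK (ψ b) = 0 := by rw [← hψchain, hbcyc, map_zero]
  refine Prod.ext ?_ ?_
  · simp only [diff, pairing, map_smul, hleibL p c b hc, hbcyc]
    simp
  · simp only [diff, pairing, map_smul, hψlie, hleibK (p + 1) γ (ψ b) hγ, hψb, hβcyc,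
      neg_one_zpow_add_one]
    simp [smul_add]

theorem pairing_diff_right (hleibL : LeibnizRule degL brL dL)
    (hleibK : LeibnizRule degK brK dK) (hdK : ∀ x : K, dK (dK x) = 0)
    (hψlie : ∀ x y : L, ψ (brL x y) = brK (ψ x) (ψ y))
    (ha : a ∈ degL (p - 1)) (hα : α ∈ degK p) (hacyc : dL a = 0) (hαcyc : dK α = -ψ a) :
    pairing brL brK dK p (a, α) (diff dL dK ψ (c, γ)) =
      diff dL dK ψ (-brL a c, -brK α (ψ c)) := by
  have hp : (-1 : ℚ) ^ p = -(-1) ^ (p - 1) := by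
    rw [← neg_one_zpow_add_one, sub_add_cancel]
  refine Prod.ext ?_ ?_
  · simp only [diff, pairing, map_neg, hleibL (p - 1) a c ha, hacyc, hp]
    simp
  · simp only [diff, pairing, map_neg, hψlie, hleibK p α (ψ c) hα, hαcyc, map_add, hdK,
      neg_one_zpow_add_one]
    simp

theorem pairing_sub_smul_pairing_swap (hantiL : GradedAntisymm degL brL)
    (hantiK : GradedAntisymm degK brK) (hleibK : LeibnizRule degK brK dK)
    (hdKdeg : ∀ i : ℤ, ∀ x : K, x ∈ degK i → dK x ∈ degK (i - 1))
    (ha : a ∈ degL (p - 1)) (hb : b ∈ degL (q - 1)) (hα : α ∈ degK p) (hβ : β ∈ degK q) :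
    pairing brL brK dK p (a, α) (b, β)
        - ((-1 : ℚ) ^ (p * q)) • pairing brL brK dK q (b, β) (a, α) =
      diff dL dK ψ (0, -brK α β) := by
  have hsignL : (-1 : ℚ) ^ p * (-1) ^ ((p - 1) * (q - 1) + 1) = (-1) ^ (p * q) * (-1) ^ q := by
    rw [← zpow_add₀ (by norm_num), ← zpow_add₀ (by norm_num)]
    exact neg_one_zpow_eq_of_even_sub_s6 ⟨1 - q, by ring⟩
  have hsignK : (-1 : ℚ) ^ ((p - 1) * q + 1) = (-1) ^ (p * q) * (-1) ^ (q + 1) := by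
    rw [← zpow_add₀ (by norm_num)]
    exact neg_one_zpow_eq_of_even_sub_s6 ⟨-q, by ring⟩
  refine Prod.ext ?_ ?_
  · simp only [diff, pairing, Prod.fst_sub, Prod.smul_fst, hantiL (p - 1) (q - 1) a b ha hb,
      smul_smul, hsignL]
    simp
  · simp only [diff, pairing, Prod.snd_sub, Prod.smul_snd, map_zero, zero_add, map_neg,
      hleibK p α β hα, hantiK (p - 1) q (dK α) β (hdKdeg p α hα) hβ, smul_smul, hsignK,
      neg_one_zpow_add_one]
    module

end MappingCone

theorem mapping_cone_pairing_descends_and_is_graded_commutative_general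
    {L K : Type} [AddCommGroup L] [Module ℚ L] [AddCommGroup K] [Module ℚ K]
    (degL : ℤ → Submodule ℚ L) (degK : ℤ → Submodule ℚ K)
    (brL : L →ₗ[ℚ] L →ₗ[ℚ] L) (brK : K →ₗ[ℚ] K →ₗ[ℚ] K)
    (dL : L →ₗ[ℚ] L) (dK : K →ₗ[ℚ] K)
    (hdKdeg : ∀ i : ℤ, ∀ x : K, x ∈ degK i → dK x ∈ degK (i - 1))
    (hdK : ∀ x : K, dK (dK x) = 0)
    (hantiL : ∀ i j : ℤ, ∀ x y : L, x ∈ degL i → y ∈ degL j →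
      brL x y = ((-1 : ℚ) ^ (i * j + 1)) • brL y x)
    (hantiK : ∀ i j : ℤ, ∀ x y : K, x ∈ degK i → y ∈ degK j →
      brK x y = ((-1 : ℚ) ^ (i * j + 1)) • brK y x)
    (hleibL : ∀ i : ℤ, ∀ x y : L, x ∈ degL i →
      dL (brL x y) = brL (dL x) y + ((-1 : ℚ) ^ i) • brL x (dL y))
    (hleibK : ∀ i : ℤ, ∀ x y : K, x ∈ degK i →
      dK (brK x y) = brK (dK x) y + ((-1 : ℚ) ^ i) • brK x (dK y))
    (ψ : L →ₗ[ℚ] K)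
    (hψlie : ∀ x y : L, ψ (brL x y) = brK (ψ x) (ψ y))
    (hψchain : ∀ x : L, ψ (dL x) = dK (ψ x))
    (p q : ℤ) (a b : L) (α β : K)
    (ha : a ∈ degL (p - 1)) (hb : b ∈ degL (q - 1))
    (hα : α ∈ degK p) (hβ : β ∈ degK q)
    (hacyc : dL a = 0) (hbcyc : dL b = 0)
    (hαcyc : dK α = -ψ a) (hβcyc : dK β = -ψ b) :
    -- the pairing of cycles is a cycle of degree p + q - 1
    (dL (((-1 : ℚ) ^ p) • brL a b) = 0 ∧
      ψ (((-1 : ℚ) ^ p) • brL a b) + dK (((-1 : ℚ) ^ (p + 1)) • brK α (dK β)) = 0)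
    ∧
    -- if the first argument is a boundary, the pairing is a boundary
    (∀ c : L, ∀ γ : K, c ∈ degL p → γ ∈ degK (p + 1) →
      a = -(dL c) → α = ψ c + dK γ →
      ∃ e : L, ∃ f : K,
        (-(dL e), ψ e + dK f) =
          (((-1 : ℚ) ^ p) • brL a b, ((-1 : ℚ) ^ (p + 1)) • brK α (dK β)))
    ∧
    -- if the second argument is a boundary, the pairing is a boundary
    (∀ c : L, ∀ γ : K, c ∈ degL q → γ ∈ degK (q + 1) →
      b = -(dL c) → β = ψ c + dK γ →
      ∃ e : L, ∃ f : K,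
        (-(dL e), ψ e + dK f) =
          (((-1 : ℚ) ^ p) • brL a b, ((-1 : ℚ) ^ (p + 1)) • brK α (dK β)))
    ∧
    -- graded commutativity up to boundary : ⟦ζa, ζb⟧ - (-1)^(pq) ⟦ζb, ζa⟧ bounds
    (∃ e : L, ∃ f : K,
      (-(dL e), ψ e + dK f) =
        (((-1 : ℚ) ^ p) • brL a b - ((-1 : ℚ) ^ (p * q)) • (((-1 : ℚ) ^ q) • brL b a),
          ((-1 : ℚ) ^ (p + 1)) • brK α (dK β)
            - ((-1 : ℚ) ^ (p * q)) • (((-1 : ℚ) ^ (q + 1)) • brK β (dK α)))) := by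
  have hcycle := Prod.mk_eq_zero.mp
    (MappingCone.diff_pairing_eq_zero hleibL hleibK hdK hψlie ha hα hacyc hbcyc hαcyc hβcyc)
  refine ⟨⟨neg_eq_zero.mp hcycle.1, hcycle.2⟩, ?_, ?_, ?_⟩
  · rintro c γ hc hγ rfl rfl
    exact ⟨_, _, (MappingCone.pairing_diff_left hleibL hleibK hψlie hψchain hc hγ hbcyc hβcyc).symm⟩
  · rintro c γ - - rfl rfl
    exact ⟨_, _, (MappingCone.pairing_diff_right hleibL hleibK hdK hψlie ha hα hacyc hαcyc).symm⟩
  · exact ⟨_, _, (MappingCone.pairing_sub_smul_pairing_swap hantiL hantiK hleibK hdKdeg ha hb hα hβ).symm⟩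

/-- The pairing `⟦(a,α),(b,β)⟧ = ((-1)^p [a,b], (-1)^(p+1) [α, dK β])` on cycles
of the mapping cone of a DG Lie algebra map sends cycles to cycles, sends a
boundary paired with a cycle (in either slot) to a boundary — hence induces a
well-defined pairing on homology lowering degree by one — and is graded
commutative in the Whitehead sense up to boundaries. -/
theorem mapping_cone_pairing_descends_and_is_graded_commutative
    {L K : Type} [AddCommGroup L] [Module ℚ L] [AddCommGroup K] [Module ℚ K]
    (degL : ℤ → Submodule ℚ L) (degK : ℤ → Submodule ℚ K)
    (brL : L →ₗ[ℚ] L →ₗ[ℚ] L) (brK : K →ₗ[ℚ] K →ₗ[ℚ] K)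
    (dL : L →ₗ[ℚ] L) (dK : K →ₗ[ℚ] K)
    (hbrLdeg : ∀ i j : ℤ, ∀ x y : L, x ∈ degL i → y ∈ degL j → brL x y ∈ degL (i + j))
    (hbrKdeg : ∀ i j : ℤ, ∀ x y : K, x ∈ degK i → y ∈ degK j → brK x y ∈ degK (i + j))
    (hdLdeg : ∀ i : ℤ, ∀ x : L, x ∈ degL i → dL x ∈ degL (i - 1))
    (hdKdeg : ∀ i : ℤ, ∀ x : K, x ∈ degK i → dK x ∈ degK (i - 1))
    (hdL : ∀ x : L, dL (dL x) = 0) (hdK : ∀ x : K, dK (dK x) = 0)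
    (hantiL : ∀ i j : ℤ, ∀ x y : L, x ∈ degL i → y ∈ degL j →
      brL x y = ((-1 : ℚ) ^ (i * j + 1)) • brL y x)
    (hantiK : ∀ i j : ℤ, ∀ x y : K, x ∈ degK i → y ∈ degK j →
      brK x y = ((-1 : ℚ) ^ (i * j + 1)) • brK y x)
    (hjacL : ∀ i j : ℤ, ∀ x y z : L, x ∈ degL i → y ∈ degL j →
      brL x (brL y z) = brL (brL x y) z + ((-1 : ℚ) ^ (i * j)) • brL y (brL x z))
    (hjacK : ∀ i j : ℤ, ∀ x y z : K, x ∈ degK i → y ∈ degK j →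
      brK x (brK y z) = brK (brK x y) z + ((-1 : ℚ) ^ (i * j)) • brK y (brK x z))
    (hleibL : ∀ i : ℤ, ∀ x y : L, x ∈ degL i →
      dL (brL x y) = brL (dL x) y + ((-1 : ℚ) ^ i) • brL x (dL y))
    (hleibK : ∀ i : ℤ, ∀ x y : K, x ∈ degK i →
      dK (brK x y) = brK (dK x) y + ((-1 : ℚ) ^ i) • brK x (dK y))
    (ψ : L →ₗ[ℚ] K)
    (hψlie : ∀ x y : L, ψ (brL x y) = brK (ψ x) (ψ y))
    (hψchain : ∀ x : L, ψ (dL x) = dK (ψ x))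
    (hψdeg : ∀ i : ℤ, ∀ x : L, x ∈ degL i → ψ x ∈ degK i)
    (p q : ℤ) (a b : L) (α β : K)
    (ha : a ∈ degL (p - 1)) (hb : b ∈ degL (q - 1))
    (hα : α ∈ degK p) (hβ : β ∈ degK q)
    (hacyc : dL a = 0) (hbcyc : dL b = 0)
    (hαcyc : dK α = -ψ a) (hβcyc : dK β = -ψ b) :
    -- the pairing of cycles is a cycle of degree p + q - 1
    (dL (((-1 : ℚ) ^ p) • brL a b) = 0 ∧
      ψ (((-1 : ℚ) ^ p) • brL a b) + dK (((-1 : ℚ) ^ (p + 1)) • brK α (dK β)) = 0)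
    ∧
    -- if the first argument is a boundary, the pairing is a boundary
    (∀ c : L, ∀ γ : K, c ∈ degL p → γ ∈ degK (p + 1) →
      a = -(dL c) → α = ψ c + dK γ →
      ∃ e : L, ∃ f : K,
        (-(dL e), ψ e + dK f) =
          (((-1 : ℚ) ^ p) • brL a b, ((-1 : ℚ) ^ (p + 1)) • brK α (dK β)))
    ∧
    -- if the second argument is a boundary, the pairing is a boundary
    (∀ c : L, ∀ γ : K, c ∈ degL q → γ ∈ degK (q + 1) →
      b = -(dL c) → β = ψ c + dK γ →
      ∃ e : L, ∃ f : K,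
        (-(dL e), ψ e + dK f) =
          (((-1 : ℚ) ^ p) • brL a b, ((-1 : ℚ) ^ (p + 1)) • brK α (dK β)))
    ∧
    -- graded commutativity up to boundary : ⟦ζa, ζb⟧ - (-1)^(pq) ⟦ζb, ζa⟧ bounds
    (∃ e : L, ∃ f : K,
      (-(dL e), ψ e + dK f) =
        (((-1 : ℚ) ^ p) • brL a b - ((-1 : ℚ) ^ (p * q)) • (((-1 : ℚ) ^ q) • brL b a),
          ((-1 : ℚ) ^ (p + 1)) • brK α (dK β)
            - ((-1 : ℚ) ^ (p * q)) • (((-1 : ℚ) ^ (q + 1)) • brK β (dK α)))) :=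
  mapping_cone_pairing_descends_and_is_graded_commutative_general degL degK brL brK dL dK hdKdeg hdK
    hantiL hantiK hleibL hleibK ψ hψlie hψchain p q a b α β ha hb hα hβ hacyc hbcyc hαcyc hβcyc
end
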